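/- arXiv:2303.14821 — 2 statements merged into one kernel-verified Lean document; each statement's English description precedes it below -/
import Mathlib

section
/- Let n, m ≥ 1 with m ≠ n, and consider the quiver 1 → 3 ← 2 with dimension vector (n₁, n₂, n₃) = (n, m, n). A weight σ = (σ₁, σ₂, σ₃) ∈ ℤ³ admits a nonzero semi-invariant polynomial if and only if σ₁ ≥ 0, σ₂ = 0, and σ₁ + σ₃ = 0. -/
/-! A semi-invariant `f` with `f(A, B) ≠ 0` has trivial character on the stabiliser of `(A, B)`.
The scalars `(c, c, c)` act trivially, which gives `n σ₁ + m σ₂ + n σ₃ = 0`. If `n < m`, `B` has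
a kernel vector `v`, and `1 + (t - 1) v uᵀ` with `u ⬝ v = 1` is an element of `GL m` of
determinant `t` fixing `B`; hence `σ₂ = 0`. If `m < n`, a left kernel vector of `B` gives likewise
`g₃ ∈ GL n` of determinant `t` with `g₃ B = B`, and at a point where `A` is moreover invertible,
`(A⁻¹ g₃ A, 1, g₃)` fixes `(A, B)`; hence `σ₁ + σ₃ = 0`. Finally `f(c A, B) = c ^ (n σ₁) f(A, B)`
is a polynomial in `c`, so `σ₁ ≥ 0`. Conversely `det A ^ σ₁` has weight `(σ₁, 0, -σ₁)`. -/

/-- Variables: entries of the matrix pair `(A, B)` with `A : n₃ × n₁` and `B : n₃ × n₂`. -/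
abbrev TriVars (n₁ n₂ n₃ : ℕ) := (Fin n₃ × Fin n₁) ⊕ (Fin n₃ × Fin n₂)

/-- Evaluate a polynomial in the matrix entries at `(A, B)`. -/
noncomputable def triEval {n₁ n₂ n₃ : ℕ} (f : MvPolynomial (TriVars n₁ n₂ n₃) ℂ)
    (A : Matrix (Fin n₃) (Fin n₁) ℂ) (B : Matrix (Fin n₃) (Fin n₂) ℂ) : ℂ :=
  MvPolynomial.eval (Sum.elim (fun p => A p.1 p.2) (fun p => B p.1 p.2)) f

/-- `f` is a semi-invariant of weight `(σ₁, σ₂, σ₃)` for the quiver `1 → 3 ← 2`. -/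
def IsTriSemiInvariant {n₁ n₂ n₃ : ℕ} (σ₁ σ₂ σ₃ : ℤ)
    (f : MvPolynomial (TriVars n₁ n₂ n₃) ℂ) : Prop :=
  ∀ (g₁ : (Matrix (Fin n₁) (Fin n₁) ℂ)ˣ) (g₂ : (Matrix (Fin n₂) (Fin n₂) ℂ)ˣ)
    (g₃ : (Matrix (Fin n₃) (Fin n₃) ℂ)ˣ)
    (A : Matrix (Fin n₃) (Fin n₁) ℂ) (B : Matrix (Fin n₃) (Fin n₂) ℂ),
    triEval f ((g₃ : Matrix (Fin n₃) (Fin n₃) ℂ) * A * (g₁⁻¹ : Matrix (Fin n₁) (Fin n₁) ℂ))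
              ((g₃ : Matrix (Fin n₃) (Fin n₃) ℂ) * B * (g₂⁻¹ : Matrix (Fin n₂) (Fin n₂) ℂ))
      = (g₁ : Matrix (Fin n₁) (Fin n₁) ℂ).det ^ (-σ₁)
        * (g₂ : Matrix (Fin n₂) (Fin n₂) ℂ).det ^ (-σ₂)
        * (g₃ : Matrix (Fin n₃) (Fin n₃) ℂ).det ^ (-σ₃)
        * triEval f A B

open Matrix MvPolynomial

theorem Polynomial.nonneg_of_eval_eq_zpow_mul {K : Type*} [Field K] [Infinite K]
    (p : Polynomial K) {a : K} (ha : a ≠ 0) {d : ℤ} (h : ∀ c ≠ 0, p.eval c = c ^ d * a) :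
    0 ≤ d := by
  by_contra! hd
  obtain ⟨k, hk, rfl⟩ : ∃ k : ℕ, k ≠ 0 ∧ d = -k := ⟨d.natAbs, by omega, by omega⟩
  have hq : X ^ k * p - C a = 0 := by
    refine eq_zero_of_infinite_isRoot _ <| (Set.finite_singleton 0).infinite_compl.mono ?_
    intro c hc
    simp [h c hc, ← mul_assoc, mul_inv_cancel₀ (pow_ne_zero k hc)]
  simpa [hk, ha] using congrArg (eval 0) hq

theorem MvPolynomial.polynomial_eval_eval₂_line {R σ : Type*} [CommSemiring R]
    (f : MvPolynomial σ R) (x y : σ → R) (c : R) :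
    (f.eval₂ Polynomial.C fun i => .C (x i) * .X + .C (y i)).eval c =
      eval (fun i => c * x i + y i) f := by
  rw [polynomial_eval_eval₂, show (Polynomial.evalRingHom c).comp Polynomial.C = RingHom.id R from
    RingHom.ext fun _ => Polynomial.eval_C]
  simp only [Polynomial.eval_add, Polynomial.eval_mul, Polynomial.eval_C, Polynomial.eval_X,
    mul_comm]
  rfl

theorem Complex.eq_zero_of_forall_zpow_eq_one {k : ℤ} (h : ∀ t : ℂ, t ≠ 0 → t ^ k = 1) :
    k = 0 := by
  have h2 : (2 : ℝ) ^ k = 1 := by simpa [norm_zpow] using congrArg (‖·‖) (h 2 two_ne_zero)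
  exact (zpow_eq_one_iff_right₀ zero_le_two (by norm_num)).mp h2

namespace Matrix

variable {K ι κ : Type*} [Field K] [Fintype ι] [Fintype κ]

theorem exists_ne_zero_mulVec_eq_zero_of_card_lt (B : Matrix ι κ K)
    (h : Fintype.card ι < Fintype.card κ) : ∃ v ≠ 0, B *ᵥ v = 0 := by
  obtain ⟨v, hv, hv0⟩ := Submodule.exists_mem_ne_zero_of_ne_bot
    (LinearMap.ker_ne_bot_of_finrank_lt (f := B.mulVecLin) (by simpa using h))
  exact ⟨v, hv0, hv⟩

theorem exists_dotProduct_eq_one [DecidableEq ι] {v : ι → K} (hv : v ≠ 0) :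
    ∃ u, u ⬝ᵥ v = 1 := by
  obtain ⟨i, hi⟩ := Function.ne_iff.mp hv
  exact ⟨Pi.single i (v i)⁻¹, by rw [single_dotProduct, inv_mul_cancel₀ hi]⟩

theorem det_one_add_smul_vecMulVec {R : Type*} [CommRing R] [DecidableEq ι] (a : R)
    (u v : ι → R) : (1 + a • vecMulVec v u).det = 1 + a * (u ⬝ᵥ v) := by
  rw [← smul_vecMulVec, vecMulVec_eq Unit, det_one_add_replicateCol_mul_replicateRow,
    dotProduct_smul, smul_eq_mul]

theorem exists_det_eq_and_self_mul_eq_self [DecidableEq κ] (B : Matrix ι κ K)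
    (h : Fintype.card ι < Fintype.card κ) {t : K} (ht : t ≠ 0) :
    ∃ g : (Matrix κ κ K)ˣ, (g : Matrix κ κ K).det = t ∧ B * (g : Matrix κ κ K) = B := by
  obtain ⟨v, hv, hBv⟩ := B.exists_ne_zero_mulVec_eq_zero_of_card_lt h
  obtain ⟨u, huv⟩ := exists_dotProduct_eq_one hv
  have hdet : (1 + (t - 1) • vecMulVec v u).det = t := by
    rw [det_one_add_smul_vecMulVec, huv]; ring
  refine ⟨GeneralLinearGroup.mkOfDetNeZero _ (by rwa [hdet]), hdet, ?_⟩
  simp [Matrix.mul_add, mul_vecMulVec, hBv]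

theorem exists_det_eq_and_mul_self_eq_self [DecidableEq ι] (B : Matrix ι κ K)
    (h : Fintype.card κ < Fintype.card ι) {t : K} (ht : t ≠ 0) :
    ∃ g : (Matrix ι ι K)ˣ, (g : Matrix ι ι K).det = t ∧ (g : Matrix ι ι K) * B = B := by
  obtain ⟨u, hu, huB⟩ := Bᵀ.exists_ne_zero_mulVec_eq_zero_of_card_lt h
  obtain ⟨v, hvu⟩ := exists_dotProduct_eq_one hu
  have hdet : (1 + (t - 1) • vecMulVec v u).det = t := by
    rw [det_one_add_smul_vecMulVec, dotProduct_comm, hvu]; ring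
  refine ⟨GeneralLinearGroup.mkOfDetNeZero _ (by rwa [hdet]), hdet, ?_⟩
  have hvuB : vecMulVec v u * B = 0 := by
    ext; simp [vecMulVec_mul, ← mulVec_transpose, huB, vecMulVec_apply]
  simp [Matrix.add_mul, hvuB]

end Matrix

noncomputable def detLeft (n₂ n : ℕ) : MvPolynomial (TriVars n n₂ n) ℂ :=
  (Matrix.of fun i j => X (Sum.inl (i, j))).det

section TriEval

variable {n₁ n₂ n₃ : ℕ}

theorem triEval_mul (f g : MvPolynomial (TriVars n₁ n₂ n₃) ℂ)
    (A : Matrix (Fin n₃) (Fin n₁) ℂ) (B : Matrix (Fin n₃) (Fin n₂) ℂ) :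
    triEval (f * g) A B = triEval f A B * triEval g A B :=
  map_mul _ _ _

theorem triEval_pow (f : MvPolynomial (TriVars n₁ n₂ n₃) ℂ) (k : ℕ)
    (A : Matrix (Fin n₃) (Fin n₁) ℂ) (B : Matrix (Fin n₃) (Fin n₂) ℂ) :
    triEval (f ^ k) A B = triEval f A B ^ k :=
  map_pow _ _ _

theorem triEval_detLeft {n : ℕ} (A : Matrix (Fin n) (Fin n) ℂ) (B : Matrix (Fin n) (Fin n₂) ℂ) :
    triEval (detLeft n₂ n) A B = A.det := by
  rw [triEval, detLeft, RingHom.map_det]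
  congr 1
  ext i j
  simp

theorem detLeft_ne_zero (n₂ n : ℕ) : detLeft n₂ n ≠ 0 := by
  intro h
  have h1 := triEval_detLeft (1 : Matrix (Fin n) (Fin n) ℂ) (0 : Matrix (Fin n) (Fin n₂) ℂ)
  simp [h, triEval] at h1

theorem exists_triEval_ne_zero {f : MvPolynomial (TriVars n₁ n₂ n₃) ℂ} (hf : f ≠ 0) :
    ∃ A B, triEval f A B ≠ 0 := by
  contrapose! hf
  refine MvPolynomial.funext fun x => ?_
  have hx : x = Sum.elim (fun p => x (.inl p)) (fun p => x (.inr p)) := by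
    ext (_ | _) <;> rfl
  rw [map_zero, hx]
  exact hf (fun i j => x (.inl (i, j))) (fun i j => x (.inr (i, j)))

theorem exists_triEval_ne_zero_and_det_ne_zero {n : ℕ} {f : MvPolynomial (TriVars n n₂ n) ℂ}
    (hf : f ≠ 0) : ∃ A B, triEval f A B ≠ 0 ∧ A.det ≠ 0 := by
  obtain ⟨A, B, h⟩ := exists_triEval_ne_zero (mul_ne_zero hf (detLeft_ne_zero n₂ n))
  rw [triEval_mul, triEval_detLeft] at h
  exact ⟨A, B, left_ne_zero_of_mul h, right_ne_zero_of_mul h⟩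

end TriEval

namespace IsTriSemiInvariant

variable {n₁ n₂ n₃ : ℕ} {σ₁ σ₂ σ₃ : ℤ} {f : MvPolynomial (TriVars n₁ n₂ n₃) ℂ}
  {A A' : Matrix (Fin n₃) (Fin n₁) ℂ} {B B' : Matrix (Fin n₃) (Fin n₂) ℂ}

theorem triEval_eq_of_mul_eq_mul (hf : IsTriSemiInvariant σ₁ σ₂ σ₃ f)
    (g₁ : (Matrix (Fin n₁) (Fin n₁) ℂ)ˣ) (g₂ : (Matrix (Fin n₂) (Fin n₂) ℂ)ˣ)
    (g₃ : (Matrix (Fin n₃) (Fin n₃) ℂ)ˣ)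
    (hA : (g₃ : Matrix (Fin n₃) (Fin n₃) ℂ) * A = A' * (g₁ : Matrix (Fin n₁) (Fin n₁) ℂ))
    (hB : (g₃ : Matrix (Fin n₃) (Fin n₃) ℂ) * B = B' * (g₂ : Matrix (Fin n₂) (Fin n₂) ℂ)) :
    triEval f A' B' = (g₁ : Matrix (Fin n₁) (Fin n₁) ℂ).det ^ (-σ₁)
        * (g₂ : Matrix (Fin n₂) (Fin n₂) ℂ).det ^ (-σ₂)
        * (g₃ : Matrix (Fin n₃) (Fin n₃) ℂ).det ^ (-σ₃) * triEval f A B := by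
  rw [← hf, hA, hB, mul_nonsing_inv_cancel_right _ _ (isUnits_det_units g₁),
    mul_nonsing_inv_cancel_right _ _ (isUnits_det_units g₂)]

theorem det_zpow_mul_eq_one (hf : IsTriSemiInvariant σ₁ σ₂ σ₃ f) (hAB : triEval f A B ≠ 0)
    (g₁ : (Matrix (Fin n₁) (Fin n₁) ℂ)ˣ) (g₂ : (Matrix (Fin n₂) (Fin n₂) ℂ)ˣ)
    (g₃ : (Matrix (Fin n₃) (Fin n₃) ℂ)ˣ)
    (hA : (g₃ : Matrix (Fin n₃) (Fin n₃) ℂ) * A = A * (g₁ : Matrix (Fin n₁) (Fin n₁) ℂ))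
    (hB : (g₃ : Matrix (Fin n₃) (Fin n₃) ℂ) * B = B * (g₂ : Matrix (Fin n₂) (Fin n₂) ℂ)) :
    (g₁ : Matrix (Fin n₁) (Fin n₁) ℂ).det ^ (-σ₁)
        * (g₂ : Matrix (Fin n₂) (Fin n₂) ℂ).det ^ (-σ₂)
        * (g₃ : Matrix (Fin n₃) (Fin n₃) ℂ).det ^ (-σ₃) = 1 :=
  (mul_eq_right₀ hAB).mp (hf.triEval_eq_of_mul_eq_mul g₁ g₂ g₃ hA hB).symm

theorem triEval_smul_left (hf : IsTriSemiInvariant σ₁ σ₂ σ₃ f) {c : ℂ} (hc : c ≠ 0) :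
    triEval f (c • A) B = c ^ ((n₁ : ℤ) * σ₁) * triEval f A B := by
  rw [hf.triEval_eq_of_mul_eq_mul (A := A) (B := B)
    (GeneralLinearGroup.scalar _ (Units.mk0 c⁻¹ (inv_ne_zero hc))) 1 1]
  · simp [← zpow_natCast, ← _root_.zpow_mul]
  · simp [scalar_apply, ← smul_eq_mul_diagonal, smul_smul, hc]
  · simp

theorem dim_mul_σ₁_nonneg (hf : IsTriSemiInvariant σ₁ σ₂ σ₃ f) (hAB : triEval f A B ≠ 0) :
    0 ≤ (n₁ : ℤ) * σ₁ := by
  -- `c ↦ f(c • A, B)` is a polynomial in `c`, so the exponent `n₁ σ₁` cannot be negative.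
  refine (f.eval₂ Polynomial.C fun i => .C (Sum.elim (fun p => A p.1 p.2) 0 i) * .X +
    .C (Sum.elim 0 (fun p => B p.1 p.2) i)).nonneg_of_eval_eq_zpow_mul hAB fun c hc => ?_
  rw [polynomial_eval_eval₂_line, ← hf.triEval_smul_left hc, triEval]
  congr
  ext (_ | _) <;> simp

theorem sum_dim_mul_weight_eq_zero (hf : IsTriSemiInvariant σ₁ σ₂ σ₃ f)
    (hAB : triEval f A B ≠ 0) :
    (n₁ : ℤ) * σ₁ + n₂ * σ₂ + n₃ * σ₃ = 0 := by
  refine neg_eq_zero.mp <| Complex.eq_zero_of_forall_zpow_eq_one fun c hc => ?_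
  let u := Units.mk0 c hc
  have h := hf.det_zpow_mul_eq_one hAB (GeneralLinearGroup.scalar _ u)
    (GeneralLinearGroup.scalar _ u) (GeneralLinearGroup.scalar _ u)
    (by simp [scalar_apply, ← smul_eq_diagonal_mul, ← smul_eq_mul_diagonal])
    (by simp [scalar_apply, ← smul_eq_diagonal_mul, ← smul_eq_mul_diagonal])
  calc c ^ (-((n₁ : ℤ) * σ₁ + n₂ * σ₂ + n₃ * σ₃))
      = (c ^ n₁) ^ (-σ₁) * (c ^ n₂) ^ (-σ₂) * (c ^ n₃) ^ (-σ₃) := by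
        simp only [← zpow_natCast, ← _root_.zpow_mul, ← zpow_add₀ hc]
        ring_nf
    _ = 1 := by simpa [u] using h

theorem σ₂_eq_zero_of_lt (hf : IsTriSemiInvariant σ₁ σ₂ σ₃ f) (hAB : triEval f A B ≠ 0)
    (h : n₃ < n₂) : σ₂ = 0 := by
  refine neg_eq_zero.mp <| Complex.eq_zero_of_forall_zpow_eq_one fun t ht => ?_
  obtain ⟨g, hg, hBg⟩ := B.exists_det_eq_and_self_mul_eq_self (by simpa using h) ht
  simpa [hg] using hf.det_zpow_mul_eq_one hAB 1 g 1 (by simp) (by simp [hBg])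

theorem σ₁_add_σ₃_eq_zero_of_lt {n : ℕ} {f : MvPolynomial (TriVars n n₂ n) ℂ}
    {A : Matrix (Fin n) (Fin n) ℂ} {B : Matrix (Fin n) (Fin n₂) ℂ}
    (hf : IsTriSemiInvariant σ₁ σ₂ σ₃ f) (hAB : triEval f A B ≠ 0) (hA : A.det ≠ 0)
    (h : n₂ < n) : σ₁ + σ₃ = 0 := by
  refine neg_eq_zero.mp <| Complex.eq_zero_of_forall_zpow_eq_one fun t ht => ?_
  obtain ⟨g, hg, hgB⟩ := B.exists_det_eq_and_mul_self_eq_self (by simpa using h) ht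
  let a : (Matrix (Fin n) (Fin n) ℂ)ˣ := GeneralLinearGroup.mkOfDetNeZero A hA
  have hga : g.val * A = A * (a⁻¹ * g * a).val := by
    change g.val * a.val = a.val * (a⁻¹ * g * a).val
    rw [← Units.val_mul, ← Units.val_mul]
    group
  have hdet : (a⁻¹ * g * a).val.det = t := by
    rw [Units.val_mul, Units.val_mul, det_units_conj', hg]
  have h := hf.det_zpow_mul_eq_one hAB (a⁻¹ * g * a) 1 g hga (by simp [hgB])
  rw [hdet, hg] at h
  simpa [neg_add, zpow_add₀ ht, mul_comm] using h

end IsTriSemiInvariant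

theorem isTriSemiInvariant_detLeft_pow (n₂ n k : ℕ) :
    IsTriSemiInvariant (k : ℤ) 0 (-k) (detLeft n₂ n ^ k) := by
  intro g₁ g₂ g₃ A B
  simp only [triEval_pow, triEval_detLeft, det_mul, det_nonsing_inv, Ring.inverse_eq_inv',
    _root_.zpow_neg, neg_neg, zpow_natCast, neg_zero, zpow_zero]
  ring

/-- for the quiver `1 → 3 ← 2` with dimension vector `(n, m, n)` where `m ≠ n`,
a weight `(σ₁, σ₂, σ₃)` admits a nonzero semi-invariant iff `σ₁ ≥ 0`, `σ₂ = 0`, `σ₁ + σ₃ = 0`. -/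
theorem tri_semiinvariant_iff_nmn (n m : ℕ) (hn : 1 ≤ n) (hm : 1 ≤ m) (hnm : m ≠ n)
    (σ₁ σ₂ σ₃ : ℤ) :
    (∃ f : MvPolynomial (TriVars n m n) ℂ, f ≠ 0 ∧ IsTriSemiInvariant σ₁ σ₂ σ₃ f)
      ↔ (0 ≤ σ₁ ∧ σ₂ = 0 ∧ σ₁ + σ₃ = 0) := by
  constructor
  · rintro ⟨f, hf0, hf⟩
    obtain ⟨A, B, hAB, hA⟩ := exists_triEval_ne_zero_and_det_ne_zero hf0
    have hσ₁ : 0 ≤ σ₁ := nonneg_of_mul_nonneg_right (hf.dim_mul_σ₁_nonneg hAB) (by omega)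
    have hsum := hf.sum_dim_mul_weight_eq_zero hAB
    rcases hnm.lt_or_gt with hlt | hgt
    · have h13 := hf.σ₁_add_σ₃_eq_zero_of_lt hAB hA hlt
      refine ⟨hσ₁, ?_, h13⟩
      have : (m : ℤ) * σ₂ = 0 := by linear_combination hsum - (n : ℤ) * h13
      simpa [show m ≠ 0 by omega] using this
    · have h2 := hf.σ₂_eq_zero_of_lt hAB hgt
      refine ⟨hσ₁, h2, ?_⟩
      have : (n : ℤ) * (σ₁ + σ₃) = 0 := by linear_combination hsum - (m : ℤ) * h2
      simpa [show n ≠ 0 by omega] using this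
  · rintro ⟨hσ₁, rfl, hσ₁₃⟩
    lift σ₁ to ℕ using hσ₁
    obtain rfl : σ₃ = -σ₁ := by omega
    exact ⟨_, pow_ne_zero _ (detLeft_ne_zero m n), isTriSemiInvariant_detLeft_pow m n σ₁⟩
end

section
/- Let n ≥ 1 and consider the square quiver with dimension vector (n₁, n₂, n₃, n₄) = (n, n, n, n+1). A weight σ = (σ₁, σ₂, σ₃, σ₄) ∈ ℤ⁴ admits a nonzero semi-invariant polynomial if and only if σ₁ + σ₂ + σ₄ ≥ 0, σ₁ + σ₃ + σ₄ ≥ 0, σ₄ ≤ 0, and n σ₁ + n σ₂ + n σ₃ + (n+1) σ₄ = 0. -/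
/-- Variables: entries of the four matrices attached to the arrows
`1 → 2`, `1 → 3`, `2 → 4`, `3 → 4` of the square quiver. -/
abbrev SqVars (n₁ n₂ n₃ n₄ : ℕ) :=
  (Fin n₂ × Fin n₁) ⊕ (Fin n₃ × Fin n₁) ⊕ (Fin n₄ × Fin n₂) ⊕ (Fin n₄ × Fin n₃)

/-- Evaluate a polynomial in the matrix entries at a representation `(v₁, v₂, v₃, v₄)`. -/
noncomputable def sqEval {n₁ n₂ n₃ n₄ : ℕ} (f : MvPolynomial (SqVars n₁ n₂ n₃ n₄) ℂ)
    (v₁ : Matrix (Fin n₂) (Fin n₁) ℂ) (v₂ : Matrix (Fin n₃) (Fin n₁) ℂ)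
    (v₃ : Matrix (Fin n₄) (Fin n₂) ℂ) (v₄ : Matrix (Fin n₄) (Fin n₃) ℂ) : ℂ :=
  MvPolynomial.eval
    (Sum.elim (fun p => v₁ p.1 p.2) <| Sum.elim (fun p => v₂ p.1 p.2) <|
      Sum.elim (fun p => v₃ p.1 p.2) (fun p => v₄ p.1 p.2)) f

/-- `f` is a semi-invariant of weight `(σ₁, σ₂, σ₃, σ₄)` for the square quiver. -/
def IsSqSemiInvariant {n₁ n₂ n₃ n₄ : ℕ} (σ₁ σ₂ σ₃ σ₄ : ℤ)
    (f : MvPolynomial (SqVars n₁ n₂ n₃ n₄) ℂ) : Prop :=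
  ∀ (g₁ : (Matrix (Fin n₁) (Fin n₁) ℂ)ˣ) (g₂ : (Matrix (Fin n₂) (Fin n₂) ℂ)ˣ)
    (g₃ : (Matrix (Fin n₃) (Fin n₃) ℂ)ˣ) (g₄ : (Matrix (Fin n₄) (Fin n₄) ℂ)ˣ)
    (v₁ : Matrix (Fin n₂) (Fin n₁) ℂ) (v₂ : Matrix (Fin n₃) (Fin n₁) ℂ)
    (v₃ : Matrix (Fin n₄) (Fin n₂) ℂ) (v₄ : Matrix (Fin n₄) (Fin n₃) ℂ),
    sqEval f
        ((g₂ : Matrix (Fin n₂) (Fin n₂) ℂ) * v₁ * (g₁⁻¹ : Matrix (Fin n₁) (Fin n₁) ℂ))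
        ((g₃ : Matrix (Fin n₃) (Fin n₃) ℂ) * v₂ * (g₁⁻¹ : Matrix (Fin n₁) (Fin n₁) ℂ))
        ((g₄ : Matrix (Fin n₄) (Fin n₄) ℂ) * v₃ * (g₂⁻¹ : Matrix (Fin n₂) (Fin n₂) ℂ))
        ((g₄ : Matrix (Fin n₄) (Fin n₄) ℂ) * v₄ * (g₃⁻¹ : Matrix (Fin n₃) (Fin n₃) ℂ))
      = (g₁ : Matrix (Fin n₁) (Fin n₁) ℂ).det ^ (-σ₁)
        * (g₂ : Matrix (Fin n₂) (Fin n₂) ℂ).det ^ (-σ₂)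
        * (g₃ : Matrix (Fin n₃) (Fin n₃) ℂ).det ^ (-σ₃)
        * (g₄ : Matrix (Fin n₄) (Fin n₄) ℂ).det ^ (-σ₄)
        * sqEval f v₁ v₂ v₃ v₄

/-!
Necessity is a Hilbert–Mumford argument. If `f v ≠ 0` and the one-parameter subgroup
`λ t = (diag (t ^ aₓ))ₓ` moves `v` polynomially in `t`, then
`t ↦ f (λ t • v) = t ^ (-⟪σ, a⟫) * f v` is a polynomial, so `⟪σ, a⟫ = ∑ₓ σₓ ∑ᵢ aₓ i ≤ 0`.
Scalars of either sign give `n σ₁ + n σ₂ + n σ₃ + (n + 1) σ₄ = 0` and scalars at vertex 4 give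
`σ₄ ≤ 0`. Moving `v` in its orbit until one row of `v₄` vanishes and the matching rows of `v₃` and
`v₁` have a single nonzero entry, the subgroup `-eₖ` at vertices 1, 2, 4 gives
`σ₁ + σ₂ + σ₄ ≥ 0`; swapping vertices 2 and 3 gives `σ₁ + σ₃ + σ₄ ≥ 0`.

For sufficiency, `det v₁` and `det v₂` have weights `(1, -1, 0, 0)` and `(1, 0, -1, 0)`, and
Schofield's determinant for `W = (ℂⁿ⁻¹, ℂⁿ⁻¹, ℂⁿ⁻¹, ℂⁿ; id, id, castSucc, succ)` has weight
`(n - 1, 1, 1, -n)`; it is nonzero because `Hom(V, W) = 0` for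
`V = (ℂⁿ, ℂⁿ, ℂⁿ, ℂⁿ⁺¹; 1, 1, castSucc, succ)`. With `t = σ₁ + σ₂ + σ₃ + σ₄ = -σ₄ / n`,
`σ = t (n - 1, 1, 1, -n) + (σ₁ + σ₃ + σ₄) (1, -1, 0, 0) + (σ₁ + σ₂ + σ₄) (1, 0, -1, 0)`.
-/

open Matrix
open scoped Kronecker

theorem Finset.prod_zpow_eq_zpow_sum {ι G : Type*} [CommGroup G] (s : Finset ι) (a : ι → ℤ)
    (t : G) : ∏ i ∈ s, t ^ a i = t ^ ∑ i ∈ s, a i := by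
  induction s using Finset.cons_induction with
  | empty => simp
  | cons i s hi ih => simp [Finset.prod_cons, Finset.sum_cons, _root_.zpow_add, ih]

lemma neg_single_lt_neg_single {ι κ : Type*} [DecidableEq ι] [DecidableEq κ] {i k : ι}
    {j l : κ} (h : -(Pi.single k 1 : ι → ℤ) i < -(Pi.single l 1 : κ → ℤ) j) : i = k ∧ j ≠ l := by
  by_cases hi : i = k <;> by_cases hj : j = l <;> simp_all

open Polynomial in
theorem nonneg_of_eval_units_eq_zpow_mul {K : Type*} [Field K] [Infinite K] {P : K[X]} {m : ℤ}
    {c : K} (hc : c ≠ 0) (h : ∀ t : Kˣ, P.eval (t : K) = ((t ^ m : Kˣ) : K) * c) : 0 ≤ m := by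
  by_contra! hm
  obtain ⟨k, hk, rfl⟩ : ∃ k : ℕ, 0 < k ∧ m = -k := ⟨(-m).toNat, by omega, by omega⟩
  have hzero : X ^ k * P - C c = 0 := by
    refine eq_zero_of_infinite_isRoot _ ((Set.finite_singleton 0).infinite_compl.mono ?_)
    intro s (hs : s ≠ 0)
    have := h (Units.mk0 s hs)
    simp_all [_root_.zpow_neg]
  simpa [hk.ne', hc] using congrArg (eval 0) hzero

theorem Matrix.det_submatrix_mul_mul {ι κ R : Type*} [Fintype ι] [DecidableEq ι] [Fintype κ]
    [DecidableEq κ] [CommRing R] (e : ι ≃ κ) (P : Matrix κ κ R) (M : Matrix κ ι R)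
    (Q : Matrix ι ι R) :
    ((P * M * Q).submatrix e id).det = P.det * (M.submatrix e id).det * Q.det := by
  rw [submatrix_mul _ _ _ id _ Function.bijective_id, submatrix_mul _ _ _ e _ e.bijective,
    det_mul, det_mul, det_submatrix_equiv_self, submatrix_id_id]

theorem Matrix.det_one_kronecker_transpose {R m k : Type*} [CommRing R] [Fintype m]
    [DecidableEq m] [Fintype k] [DecidableEq k] (B : Matrix k k R) :
    ((1 : Matrix m m R) ⊗ₖ Bᵀ).det = B.det ^ Fintype.card m := by
  rw [det_kronecker, det_one, det_transpose, one_pow, one_mul]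

section OneParameterSubgroups

open Polynomial

variable {ι κ R : Type*} [Fintype ι] [DecidableEq ι] [Fintype κ] [DecidableEq κ] [CommRing R]

def Matrix.diagonalUnits : (ι → Rˣ) →* (Matrix ι ι R)ˣ :=
  (Units.map (diagonalRingHom ι R).toMonoidHom).comp MulEquiv.piUnits.symm.toMonoidHom

lemma Matrix.coe_diagonalUnits (d : ι → Rˣ) :
    (diagonalUnits d : Matrix ι ι R) = diagonal fun i => (d i : R) := rfl

lemma Matrix.inv_coe_diagonalUnits (d : ι → Rˣ) :
    (diagonalUnits d : Matrix ι ι R)⁻¹ = diagonal fun i => (((d i)⁻¹ : Rˣ) : R) := by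
  rw [← coe_units_inv, ← map_inv, coe_diagonalUnits]
  rfl

lemma Matrix.det_diagonalUnits_zpow (t : Rˣ) (a : ι → ℤ) :
    (diagonalUnits (fun i => t ^ a i) : Matrix ι ι R).det = ((t ^ ∑ i, a i : Rˣ) : R) := by
  rw [coe_diagonalUnits, det_diagonal, ← Units.coe_prod, Finset.prod_zpow_eq_zpow_sum]

/-- `diag (t ^ a) * v * diag (t ^ b)⁻¹` as a polynomial matrix in `t`; this is only correct when
`v i j = 0` whenever `a i < b j`, since `Int.toNat` truncates. -/
noncomputable def Matrix.degeneration (a : ι → ℤ) (b : κ → ℤ) (v : Matrix ι κ R) :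
    Matrix ι κ R[X] :=
  of fun i j => C (v i j) * X ^ (a i - b j).toNat

lemma Matrix.degeneration_map_eval {a : ι → ℤ} {b : κ → ℤ} {v : Matrix ι κ R}
    (hv : ∀ i j, a i < b j → v i j = 0) (t : Rˣ) :
    (degeneration a b v).map (eval (t : R)) =
      (diagonalUnits (fun i => t ^ a i) : Matrix ι ι R) * v *
        (diagonalUnits (fun j => t ^ b j) : Matrix κ κ R)⁻¹ := by
  ext i j
  rw [inv_coe_diagonalUnits, coe_diagonalUnits, mul_diagonal, diagonal_mul]
  by_cases hij : a i < b j
  · simp [degeneration, hv i j hij]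
  · have : ((t ^ (a i - b j).toNat : Rˣ) : R) = ((t ^ a i * (t ^ b j)⁻¹ : Rˣ) : R) := by
      rw [← zpow_natCast, Int.toNat_of_nonneg (by omega), _root_.zpow_sub]
    simp only [degeneration, map_apply, of_apply, eval_mul, eval_C, eval_pow, eval_X]
    rw [← Units.val_pow_eq_pow_val, this, Units.val_mul]
    ring

end OneParameterSubgroups

section RowReduction

variable {ι κ K : Type*} [Fintype ι] [DecidableEq ι] [Field K]

theorem Matrix.exists_units_row_eq {u : ι → K} (hu : u ≠ 0) :
    ∃ (g : (Matrix ι ι K)ˣ) (k : ι), (g : Matrix ι ι K) k = u := by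
  obtain ⟨k, hk⟩ := Function.ne_iff.1 hu
  have hdet : ((1 : Matrix ι ι K).updateRow k u).det = u k := by
    rw [← cramer_transpose_apply, transpose_one, cramer_one]
    rfl
  exact ⟨nonsingInvUnit _ (hdet ▸ hk.isUnit), k, updateRow_self⟩

theorem Matrix.exists_units_vecMul_inv_eq_zero [Nonempty ι] (r : ι → K) :
    ∃ (g : (Matrix ι ι K)ˣ) (k : ι), ∀ j ≠ k, (r ᵥ* (g : Matrix ι ι K)⁻¹) j = 0 := by
  rcases eq_or_ne r 0 with rfl | hr
  · exact ⟨1, Classical.arbitrary ι, fun j _ => by simp⟩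
  obtain ⟨g, k, rfl⟩ := exists_units_row_eq hr
  refine ⟨g, k, fun j hj => ?_⟩
  rw [← mul_apply_eq_vecMul, ← coe_units_inv, Units.mul_inv, one_apply_ne hj.symm]

theorem Matrix.exists_units_mul_row_eq_zero [Fintype κ] (v : Matrix ι κ K)
    (h : Fintype.card κ < Fintype.card ι) :
    ∃ (g : (Matrix ι ι K)ˣ) (k : ι), ((g : Matrix ι ι K) * v) k = 0 := by
  have hker : LinearMap.ker (vecMulLinear v) ≠ ⊥ :=
    LinearMap.ker_ne_bot_of_finrank_lt (by simpa using h)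
  obtain ⟨u, hu, hu0⟩ := Submodule.exists_mem_ne_zero_of_ne_bot hker
  obtain ⟨g, k, rfl⟩ := exists_units_row_eq hu0
  exact ⟨g, k, hu⟩

end RowReduction

theorem Matrix.eq_zero_of_diagonal_shift {R : Type*} [Zero R] {n : ℕ}
    {Ψ : Matrix (Fin (n + 2)) (Fin (n + 1)) R}
    (hshift : ∀ (i : Fin (n + 1)) (a : Fin n), Ψ i.castSucc a.castSucc = Ψ i.succ a.succ)
    (hlast : ∀ i : Fin (n + 1), Ψ i.castSucc (Fin.last n) = 0)
    (hzero : ∀ i : Fin (n + 1), Ψ i.succ 0 = 0) : Ψ = 0 := by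
  have below : ∀ c : Fin (n + 1), ∀ k : Fin (n + 2), (c : ℕ) < k → Ψ k c = 0 := by
    intro c
    induction c using Fin.induction with
    | zero =>
      intro k hk
      obtain ⟨i, rfl⟩ := (Fin.exists_succ_eq (x := k)).2 (by rintro rfl; simp at hk)
      exact hzero i
    | succ a ih =>
      intro k hk
      obtain ⟨i, rfl⟩ := (Fin.exists_succ_eq (x := k)).2 (by rintro rfl; simp at hk)
      rw [← hshift]
      exact ih _ (by simpa using hk)
  have above : ∀ c : Fin (n + 1), ∀ k : Fin (n + 2), (k : ℕ) ≤ c → Ψ k c = 0 := by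
    intro c
    induction c using Fin.reverseInduction with
    | last =>
      intro k hk
      obtain ⟨i, rfl⟩ := (Fin.exists_castSucc_eq (i := k)).2 (by rintro rfl; simp at hk)
      exact hlast i
    | cast a ih =>
      intro k hk
      obtain ⟨i, rfl⟩ := (Fin.exists_castSucc_eq (i := k)).2 (by rintro rfl; simp at hk; omega)
      rw [hshift]
      exact ih _ (by simpa using hk)
  ext k c
  exact (lt_or_ge (c : ℕ) k).elim (below c k) (above c k)

section Evaluation

open MvPolynomial

variable {R : Type*} [CommSemiring R] {n₁ n₂ n₃ n₄ : ℕ}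

def sqPoint (v₁ : Matrix (Fin n₂) (Fin n₁) R) (v₂ : Matrix (Fin n₃) (Fin n₁) R)
    (v₃ : Matrix (Fin n₄) (Fin n₂) R) (v₄ : Matrix (Fin n₄) (Fin n₃) R) :
    SqVars n₁ n₂ n₃ n₄ → R :=
  Sum.elim (fun p => v₁ p.1 p.2) <| Sum.elim (fun p => v₂ p.1 p.2) <|
    Sum.elim (fun p => v₃ p.1 p.2) (fun p => v₄ p.1 p.2)

lemma sqEval_eq_eval_sqPoint (f : MvPolynomial (SqVars n₁ n₂ n₃ n₄) ℂ)
    (v₁ : Matrix (Fin n₂) (Fin n₁) ℂ) (v₂ : Matrix (Fin n₃) (Fin n₁) ℂ)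
    (v₃ : Matrix (Fin n₄) (Fin n₂) ℂ) (v₄ : Matrix (Fin n₄) (Fin n₃) ℂ) :
    sqEval f v₁ v₂ v₃ v₄ = eval (sqPoint v₁ v₂ v₃ v₄) f := rfl

lemma sqPoint_map {S : Type*} [CommSemiring S] (φ : R →+* S)
    (v₁ : Matrix (Fin n₂) (Fin n₁) R) (v₂ : Matrix (Fin n₃) (Fin n₁) R)
    (v₃ : Matrix (Fin n₄) (Fin n₂) R) (v₄ : Matrix (Fin n₄) (Fin n₃) R) :
    sqPoint (v₁.map φ) (v₂.map φ) (v₃.map φ) (v₄.map φ) = φ ∘ sqPoint v₁ v₂ v₃ v₄ := by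
  funext x
  rcases x with _ | _ | _ | _ <;> rfl

lemma sqEval_mul (f g : MvPolynomial (SqVars n₁ n₂ n₃ n₄) ℂ)
    (v₁ : Matrix (Fin n₂) (Fin n₁) ℂ) (v₂ : Matrix (Fin n₃) (Fin n₁) ℂ)
    (v₃ : Matrix (Fin n₄) (Fin n₂) ℂ) (v₄ : Matrix (Fin n₄) (Fin n₃) ℂ) :
    sqEval (f * g) v₁ v₂ v₃ v₄ = sqEval f v₁ v₂ v₃ v₄ * sqEval g v₁ v₂ v₃ v₄ :=
  map_mul _ f g

lemma sqEval_map_eval (f : MvPolynomial (SqVars n₁ n₂ n₃ n₄) ℂ)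
    (W₁ : Matrix (Fin n₂) (Fin n₁) (Polynomial ℂ)) (W₂ : Matrix (Fin n₃) (Fin n₁) (Polynomial ℂ))
    (W₃ : Matrix (Fin n₄) (Fin n₂) (Polynomial ℂ)) (W₄ : Matrix (Fin n₄) (Fin n₃) (Polynomial ℂ))
    (s : ℂ) :
    sqEval f (W₁.map (Polynomial.eval s)) (W₂.map (Polynomial.eval s))
        (W₃.map (Polynomial.eval s)) (W₄.map (Polynomial.eval s)) =
      (eval₂ Polynomial.C (sqPoint W₁ W₂ W₃ W₄) f).eval s := by
  have hC : (Polynomial.evalRingHom s).comp Polynomial.C = RingHom.id ℂ :=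
    RingHom.ext fun _ => Polynomial.eval_C
  rw [← Polynomial.coe_evalRingHom, sqEval_eq_eval_sqPoint, sqPoint_map, eval₂_comp_left, hC]
  rfl

lemma exists_sqEval_ne_zero {f : MvPolynomial (SqVars n₁ n₂ n₃ n₄) ℂ} (hf : f ≠ 0) :
    ∃ v₁ v₂ v₃ v₄, sqEval f v₁ v₂ v₃ v₄ ≠ 0 := by
  obtain ⟨x, hx⟩ : ∃ x, eval x f ≠ 0 := by
    by_contra! h
    exact hf (MvPolynomial.funext fun x => by simp [h x])
  refine ⟨of fun i j => x (.inl (i, j)), of fun i j => x (.inr (.inl (i, j))),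
    of fun i j => x (.inr (.inr (.inl (i, j)))), of fun i j => x (.inr (.inr (.inr (i, j)))), ?_⟩
  rw [sqEval_eq_eval_sqPoint]
  convert hx using 3
  funext y
  rcases y with _ | _ | _ | _ <;> rfl

end Evaluation

section Symmetry

open MvPolynomial

variable {k m : ℕ}

def sqSwap23 : Equiv.Perm (SqVars k k k m) :=
  Function.Involutive.toPerm
    (Sum.elim (Sum.inr ∘ Sum.inl) <| Sum.elim Sum.inl <|
      Sum.elim (Sum.inr ∘ Sum.inr ∘ Sum.inr) (Sum.inr ∘ Sum.inr ∘ Sum.inl))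
    (by rintro (_ | _ | _ | _) <;> rfl)

lemma sqEval_rename_sqSwap23 (f : MvPolynomial (SqVars k k k m) ℂ)
    (v₁ v₂ : Matrix (Fin k) (Fin k) ℂ) (v₃ v₄ : Matrix (Fin m) (Fin k) ℂ) :
    sqEval (rename sqSwap23 f) v₁ v₂ v₃ v₄ = sqEval f v₂ v₁ v₄ v₃ := by
  rw [sqEval_eq_eval_sqPoint, eval_rename]
  congr 2
  funext x
  rcases x with _ | _ | _ | _ <;> rfl

theorem IsSqSemiInvariant.rename_sqSwap23 {σ₁ σ₂ σ₃ σ₄ : ℤ}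
    {f : MvPolynomial (SqVars k k k m) ℂ} (hf : IsSqSemiInvariant σ₁ σ₂ σ₃ σ₄ f) :
    IsSqSemiInvariant σ₁ σ₃ σ₂ σ₄ (rename sqSwap23 f) := by
  intro g₁ g₂ g₃ g₄ v₁ v₂ v₃ v₄
  rw [sqEval_rename_sqSwap23, sqEval_rename_sqSwap23, hf g₁ g₃ g₂ g₄]
  ring

end Symmetry

theorem isSqSemiInvariant_one {n₁ n₂ n₃ n₄ : ℕ} :
    IsSqSemiInvariant (n₁ := n₁) (n₂ := n₂) (n₃ := n₃) (n₄ := n₄) 0 0 0 0 1 := by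
  intro _ _ _ _ _ _ _ _
  simp [sqEval]

namespace IsSqSemiInvariant

variable {n₁ n₂ n₃ n₄ : ℕ} {σ₁ σ₂ σ₃ σ₄ τ₁ τ₂ τ₃ τ₄ : ℤ}
  {f g : MvPolynomial (SqVars n₁ n₂ n₃ n₄) ℂ}

theorem mul (hf : IsSqSemiInvariant σ₁ σ₂ σ₃ σ₄ f) (hg : IsSqSemiInvariant τ₁ τ₂ τ₃ τ₄ g) :
    IsSqSemiInvariant (σ₁ + τ₁) (σ₂ + τ₂) (σ₃ + τ₃) (σ₄ + τ₄) (f * g) := by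
  intro g₁ g₂ g₃ g₄ v₁ v₂ v₃ v₄
  rw [sqEval_mul, sqEval_mul, hf, hg, neg_add, neg_add, neg_add, neg_add,
    zpow_add₀ (GeneralLinearGroup.det_ne_zero g₁), zpow_add₀ (GeneralLinearGroup.det_ne_zero g₂),
    zpow_add₀ (GeneralLinearGroup.det_ne_zero g₃), zpow_add₀ (GeneralLinearGroup.det_ne_zero g₄)]
  ring

theorem pow (hf : IsSqSemiInvariant σ₁ σ₂ σ₃ σ₄ f) (k : ℕ) :
    IsSqSemiInvariant (k * σ₁) (k * σ₂) (k * σ₃) (k * σ₄) (f ^ k) := by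
  induction k with
  | zero => simpa using isSqSemiInvariant_one
  | succ k ih => simpa [pow_succ, add_mul] using ih.mul hf

theorem sqEval_smul_ne_zero (hf : IsSqSemiInvariant σ₁ σ₂ σ₃ σ₄ f)
    (g₁ : (Matrix (Fin n₁) (Fin n₁) ℂ)ˣ) (g₂ : (Matrix (Fin n₂) (Fin n₂) ℂ)ˣ)
    (g₃ : (Matrix (Fin n₃) (Fin n₃) ℂ)ˣ) (g₄ : (Matrix (Fin n₄) (Fin n₄) ℂ)ˣ)
    {v₁ : Matrix (Fin n₂) (Fin n₁) ℂ} {v₂ : Matrix (Fin n₃) (Fin n₁) ℂ}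
    {v₃ : Matrix (Fin n₄) (Fin n₂) ℂ} {v₄ : Matrix (Fin n₄) (Fin n₃) ℂ}
    (hv : sqEval f v₁ v₂ v₃ v₄ ≠ 0) :
    sqEval f ((g₂ : Matrix (Fin n₂) (Fin n₂) ℂ) * v₁ * (g₁ : Matrix (Fin n₁) (Fin n₁) ℂ)⁻¹)
      ((g₃ : Matrix (Fin n₃) (Fin n₃) ℂ) * v₂ * (g₁ : Matrix (Fin n₁) (Fin n₁) ℂ)⁻¹)
      ((g₄ : Matrix (Fin n₄) (Fin n₄) ℂ) * v₃ * (g₂ : Matrix (Fin n₂) (Fin n₂) ℂ)⁻¹)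
      ((g₄ : Matrix (Fin n₄) (Fin n₄) ℂ) * v₄ * (g₃ : Matrix (Fin n₃) (Fin n₃) ℂ)⁻¹) ≠ 0 := by
  rw [hf]
  have := GeneralLinearGroup.det_ne_zero g₁
  have := GeneralLinearGroup.det_ne_zero g₂
  have := GeneralLinearGroup.det_ne_zero g₃
  have := GeneralLinearGroup.det_ne_zero g₄
  positivity

theorem weight_pairing_nonpos (hf : IsSqSemiInvariant σ₁ σ₂ σ₃ σ₄ f)
    (a₁ : Fin n₁ → ℤ) (a₂ : Fin n₂ → ℤ) (a₃ : Fin n₃ → ℤ) (a₄ : Fin n₄ → ℤ)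
    {v₁ : Matrix (Fin n₂) (Fin n₁) ℂ} {v₂ : Matrix (Fin n₃) (Fin n₁) ℂ}
    {v₃ : Matrix (Fin n₄) (Fin n₂) ℂ} {v₄ : Matrix (Fin n₄) (Fin n₃) ℂ}
    (hv : sqEval f v₁ v₂ v₃ v₄ ≠ 0)
    (h₁ : ∀ i j, a₂ i < a₁ j → v₁ i j = 0) (h₂ : ∀ i j, a₃ i < a₁ j → v₂ i j = 0)
    (h₃ : ∀ i j, a₄ i < a₂ j → v₃ i j = 0) (h₄ : ∀ i j, a₄ i < a₃ j → v₄ i j = 0) :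
    σ₁ * ∑ i, a₁ i + σ₂ * ∑ i, a₂ i + σ₃ * ∑ i, a₃ i + σ₄ * ∑ i, a₄ i ≤ 0 := by
  have key : ∀ t : ℂˣ, (MvPolynomial.eval₂ Polynomial.C (sqPoint (degeneration a₂ a₁ v₁)
      (degeneration a₃ a₁ v₂) (degeneration a₄ a₂ v₃) (degeneration a₄ a₃ v₄)) f).eval ↑t =
      ((t ^ (-(σ₁ * ∑ i, a₁ i + σ₂ * ∑ i, a₂ i + σ₃ * ∑ i, a₃ i + σ₄ * ∑ i, a₄ i)) : ℂˣ) : ℂ) *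
        sqEval f v₁ v₂ v₃ v₄ := by
    intro t
    have := hf (diagonalUnits fun i => t ^ a₁ i) (diagonalUnits fun i => t ^ a₂ i)
      (diagonalUnits fun i => t ^ a₃ i) (diagonalUnits fun i => t ^ a₄ i) v₁ v₂ v₃ v₄
    rw [← degeneration_map_eval h₁, ← degeneration_map_eval h₂, ← degeneration_map_eval h₃,
      ← degeneration_map_eval h₄] at this
    rw [← sqEval_map_eval, this]
    simp only [det_diagonalUnits_zpow, ← Units.val_zpow_eq_zpow_val, ← Units.val_mul,
      ← _root_.zpow_mul, ← _root_.zpow_add]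
    ring_nf
  linarith [nonneg_of_eval_units_eq_zpow_mul hv key]

theorem weight_dimension_pairing_eq_zero (hf : IsSqSemiInvariant σ₁ σ₂ σ₃ σ₄ f) (hf0 : f ≠ 0) :
    σ₁ * n₁ + σ₂ * n₂ + σ₃ * n₃ + σ₄ * n₄ = 0 := by
  obtain ⟨v₁, v₂, v₃, v₄, hv⟩ := exists_sqEval_ne_zero hf0
  have hle := hf.weight_pairing_nonpos 1 1 1 1 hv (by simp) (by simp) (by simp) (by simp)
  have hge := hf.weight_pairing_nonpos (-1) (-1) (-1) (-1) hv (by simp) (by simp) (by simp)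
    (by simp)
  simp only [Pi.one_apply, Pi.neg_apply, Finset.sum_const, Finset.card_univ, Fintype.card_fin,
    nsmul_eq_mul, mul_one] at hle hge
  linarith

theorem weight₄_nonpos (hf : IsSqSemiInvariant σ₁ σ₂ σ₃ σ₄ f) (hf0 : f ≠ 0) (hn₄ : 0 < n₄) :
    σ₄ ≤ 0 := by
  obtain ⟨v₁, v₂, v₃, v₄, hv⟩ := exists_sqEval_ne_zero hf0
  have := hf.weight_pairing_nonpos 0 0 0 1 hv (by simp) (by simp) (by simp) (by simp)
  simp only [Pi.zero_apply, Pi.one_apply, Finset.sum_const_zero, Finset.sum_const,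
    Finset.card_univ, Fintype.card_fin, nsmul_eq_mul, mul_one, mul_zero, zero_add] at this
  exact nonpos_of_mul_nonpos_left this (by exact_mod_cast hn₄)

theorem weight₁₂₄_nonneg (hf : IsSqSemiInvariant σ₁ σ₂ σ₃ σ₄ f) (hf0 : f ≠ 0)
    (hn₁ : 0 < n₁) (hn₂ : 0 < n₂) (hn₃₄ : n₃ < n₄) : 0 ≤ σ₁ + σ₂ + σ₄ := by
  have : NeZero n₁ := ⟨hn₁.ne'⟩
  have : NeZero n₂ := ⟨hn₂.ne'⟩
  obtain ⟨v₁, v₂, v₃, v₄, hv⟩ := exists_sqEval_ne_zero hf0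
  obtain ⟨g₄, k₄, h₄⟩ := exists_units_mul_row_eq_zero v₄ (by simpa using hn₃₄)
  obtain ⟨g₂, k₂, h₃⟩ :=
    exists_units_vecMul_inv_eq_zero (((g₄ : Matrix (Fin n₄) (Fin n₄) ℂ) * v₃) k₄)
  obtain ⟨g₁, k₁, h₁⟩ :=
    exists_units_vecMul_inv_eq_zero (((g₂ : Matrix (Fin n₂) (Fin n₂) ℂ) * v₁) k₂)
  have := hf.weight_pairing_nonpos (-Pi.single k₁ 1) (-Pi.single k₂ 1) 0 (-Pi.single k₄ 1)
    (hf.sqEval_smul_ne_zero g₁ g₂ 1 g₄ hv) ?_ ?_ ?_ ?_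
  · simp only [Pi.neg_apply, Finset.sum_neg_distrib, Finset.sum_pi_single', Finset.mem_univ,
      ↓reduceIte, Pi.zero_apply, Finset.sum_const_zero] at this
    linarith
  · intro i j hij
    obtain ⟨rfl, hj⟩ := neg_single_lt_neg_single hij
    exact h₁ j hj
  · intro i j hij
    simp only [Pi.zero_apply, Pi.neg_apply, Pi.single_apply] at hij
    split_ifs at hij <;> omega
  · intro i j hij
    obtain ⟨rfl, hj⟩ := neg_single_lt_neg_single hij
    exact h₃ j hj
  · intro i j hij
    obtain rfl : i = k₄ := by by_contra hi; simp [hi] at hij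
    simp [h₄]

end IsSqSemiInvariant

namespace Schofield

variable {R : Type*} [CommRing R] (p : ℕ)

def castSuccMatrix : Matrix (Fin (p + 1)) (Fin p) R :=
  of fun i j => if i = j.castSucc then 1 else 0

def succMatrix : Matrix (Fin (p + 1)) (Fin p) R :=
  of fun i j => if i = j.succ then 1 else 0

abbrev Cols := ((Fin p × Fin (p + 1)) ⊕ (Fin p × Fin (p + 1))) ⊕
  ((Fin p × Fin (p + 1)) ⊕ (Fin (p + 1) × Fin (p + 2)))

abbrev Rows := ((Fin p × Fin (p + 1)) ⊕ (Fin p × Fin (p + 1))) ⊕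
  ((Fin (p + 1) × Fin (p + 1)) ⊕ (Fin (p + 1) × Fin (p + 1)))

/-- The map `⊕ₓ Hom(Vₓ, Wₓ) → ⊕_{a : x → y} Hom(Vₓ, W_y)`, `φ ↦ (wₐ φₓ - φ_y vₐ)ₐ`, where `W` has
dimension vector `(p, p, p, p + 1)` and maps `(1, 1, castSuccMatrix p, succMatrix p)`; the entry
`φ a i` sits at index `(a, i)` of its block. Its determinant after reindexing the rows
(`squareDet`) is Schofield's semi-invariant. -/
def matrix (v₁ v₂ : Matrix (Fin (p + 1)) (Fin (p + 1)) R)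
    (v₃ v₄ : Matrix (Fin (p + 2)) (Fin (p + 1)) R) : Matrix (Rows p) (Cols p) R :=
  fromBlocks
    (fromBlocks 1 (-(1 ⊗ₖ v₁ᵀ)) 1 0)
    (fromBlocks 0 0 (-(1 ⊗ₖ v₂ᵀ)) 0)
    (fromBlocks 0 (castSuccMatrix p ⊗ₖ 1) 0 0)
    (fromBlocks 0 (-(1 ⊗ₖ v₃ᵀ)) (succMatrix p ⊗ₖ 1) (-(1 ⊗ₖ v₄ᵀ)))

def rowFactor (b₁ b₂ b₃ : Matrix (Fin (p + 1)) (Fin (p + 1)) R) :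
    Matrix (Rows p) (Rows p) R :=
  fromBlocks (fromBlocks (1 ⊗ₖ b₁ᵀ) 0 0 (1 ⊗ₖ b₁ᵀ)) 0 0 (fromBlocks (1 ⊗ₖ b₂ᵀ) 0 0 (1 ⊗ₖ b₃ᵀ))

def colFactor (a₁ a₂ a₃ : Matrix (Fin (p + 1)) (Fin (p + 1)) R)
    (a₄ : Matrix (Fin (p + 2)) (Fin (p + 2)) R) : Matrix (Cols p) (Cols p) R :=
  fromBlocks (fromBlocks (1 ⊗ₖ a₁ᵀ) 0 0 (1 ⊗ₖ a₂ᵀ)) 0 0 (fromBlocks (1 ⊗ₖ a₃ᵀ) 0 0 (1 ⊗ₖ a₄ᵀ))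

noncomputable def colsEquivRows : Cols p ≃ Rows p :=
  Fintype.equivOfCardEq (by simp only [Fintype.card_sum, Fintype.card_prod, Fintype.card_fin]; ring)

noncomputable def squareDet (v₁ v₂ : Matrix (Fin (p + 1)) (Fin (p + 1)) R)
    (v₃ v₄ : Matrix (Fin (p + 2)) (Fin (p + 1)) R) : R :=
  ((matrix p v₁ v₂ v₃ v₄).submatrix (colsEquivRows p) id).det

variable {p}

theorem matrix_smul (v₁ v₂ : Matrix (Fin (p + 1)) (Fin (p + 1)) R)
    (v₃ v₄ : Matrix (Fin (p + 2)) (Fin (p + 1)) R)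
    {a₁ a₂ a₃ b₁ b₂ b₃ : Matrix (Fin (p + 1)) (Fin (p + 1)) R}
    (a₄ : Matrix (Fin (p + 2)) (Fin (p + 2)) R)
    (h₁ : a₁ * b₁ = 1) (h₂ : a₂ * b₂ = 1) (h₃ : a₃ * b₃ = 1) :
    matrix p (a₂ * v₁ * b₁) (a₃ * v₂ * b₁) (a₄ * v₃ * b₂) (a₄ * v₄ * b₃) =
      rowFactor p b₁ b₂ b₃ * matrix p v₁ v₂ v₃ v₄ * colFactor p a₁ a₂ a₃ a₄ := by
  have ht : ∀ {a b : Matrix (Fin (p + 1)) (Fin (p + 1)) R}, a * b = 1 → bᵀ * aᵀ = 1 :=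
    fun h => by rw [← transpose_mul, h, transpose_one]
  simp only [matrix, rowFactor, colFactor, fromBlocks_multiply, Matrix.mul_zero, Matrix.zero_mul,
    add_zero, zero_add, Matrix.mul_one, Matrix.one_mul, Matrix.neg_mul, Matrix.mul_neg,
    ← mul_kronecker_mul, neg_zero, transpose_mul, Matrix.mul_assoc, ht h₁, ht h₂, ht h₃,
    one_kronecker_one]

lemma det_rowFactor (b₁ b₂ b₃ : Matrix (Fin (p + 1)) (Fin (p + 1)) R) :
    (rowFactor p b₁ b₂ b₃).det = b₁.det ^ (2 * p) * b₂.det ^ (p + 1) * b₃.det ^ (p + 1) := by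
  simp only [rowFactor, det_fromBlocks_zero₂₁, det_one_kronecker_transpose, Fintype.card_fin]
  ring

lemma det_colFactor (a₁ a₂ a₃ : Matrix (Fin (p + 1)) (Fin (p + 1)) R)
    (a₄ : Matrix (Fin (p + 2)) (Fin (p + 2)) R) :
    (colFactor p a₁ a₂ a₃ a₄).det = a₁.det ^ p * a₂.det ^ p * a₃.det ^ p * a₄.det ^ (p + 1) := by
  simp only [colFactor, det_fromBlocks_zero₂₁, det_one_kronecker_transpose, Fintype.card_fin]
  ring

theorem squareDet_smul (v₁ v₂ : Matrix (Fin (p + 1)) (Fin (p + 1)) R)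
    (v₃ v₄ : Matrix (Fin (p + 2)) (Fin (p + 1)) R)
    {a₁ a₂ a₃ b₁ b₂ b₃ : Matrix (Fin (p + 1)) (Fin (p + 1)) R}
    (a₄ : Matrix (Fin (p + 2)) (Fin (p + 2)) R)
    (h₁ : a₁ * b₁ = 1) (h₂ : a₂ * b₂ = 1) (h₃ : a₃ * b₃ = 1) :
    squareDet p (a₂ * v₁ * b₁) (a₃ * v₂ * b₁) (a₄ * v₃ * b₂) (a₄ * v₄ * b₃) =
      b₁.det ^ (2 * p) * b₂.det ^ (p + 1) * b₃.det ^ (p + 1) * squareDet p v₁ v₂ v₃ v₄ *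
        (a₁.det ^ p * a₂.det ^ p * a₃.det ^ p * a₄.det ^ (p + 1)) := by
  rw [squareDet, matrix_smul v₁ v₂ v₃ v₄ a₄ h₁ h₂ h₃, det_submatrix_mul_mul, det_rowFactor,
    det_colFactor, squareDet]

lemma map_matrix {S : Type*} [CommRing S] (φ : R →+* S)
    (v₁ v₂ : Matrix (Fin (p + 1)) (Fin (p + 1)) R)
    (v₃ v₄ : Matrix (Fin (p + 2)) (Fin (p + 1)) R) :
    (matrix p v₁ v₂ v₃ v₄).map φ = matrix p (v₁.map φ) (v₂.map φ) (v₃.map φ) (v₄.map φ) := by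
  ext (((⟨a, i⟩ | ⟨a, i⟩) | (⟨c, i⟩ | ⟨c, i⟩))) (((⟨b, l⟩ | ⟨b, l⟩) | (⟨b, l⟩ | ⟨d, l⟩))) <;>
    simp [matrix, castSuccMatrix, succMatrix, one_apply, apply_ite φ]

lemma map_squareDet {S : Type*} [CommRing S] (φ : R →+* S)
    (v₁ v₂ : Matrix (Fin (p + 1)) (Fin (p + 1)) R)
    (v₃ v₄ : Matrix (Fin (p + 2)) (Fin (p + 1)) R) :
    φ (squareDet p v₁ v₂ v₃ v₄) = squareDet p (v₁.map φ) (v₂.map φ) (v₃.map φ) (v₄.map φ) := by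
  rw [squareDet, RingHom.map_det, RingHom.mapMatrix_apply, ← submatrix_map, map_matrix]
  rfl

section Entries

variable {m n : Type*}

@[simp]
lemma transpose_castSuccMatrix_mul_apply [Fintype n] (B : Matrix (Fin (p + 1)) n R) (i : Fin p)
    (c : n) : ((castSuccMatrix p : Matrix _ _ R)ᵀ * B) i c = B i.castSucc c := by
  simp [mul_apply, castSuccMatrix]

@[simp]
lemma transpose_succMatrix_mul_apply [Fintype n] (B : Matrix (Fin (p + 1)) n R) (i : Fin p)
    (c : n) : ((succMatrix p : Matrix _ _ R)ᵀ * B) i c = B i.succ c := by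
  simp [mul_apply, succMatrix]

@[simp]
lemma mul_transpose_castSuccMatrix_apply_castSucc (A : Matrix m (Fin p) R) (i : m) (a : Fin p) :
    (A * (castSuccMatrix p : Matrix _ _ R)ᵀ) i a.castSucc = A i a := by
  simp [mul_apply, castSuccMatrix]

@[simp]
lemma mul_transpose_castSuccMatrix_apply_last (A : Matrix m (Fin p) R) (i : m) :
    (A * (castSuccMatrix p : Matrix _ _ R)ᵀ) i (Fin.last p) = 0 := by
  simp [mul_apply, castSuccMatrix, (Fin.castSucc_lt_last _).ne']

@[simp]
lemma mul_transpose_succMatrix_apply_succ (A : Matrix m (Fin p) R) (i : m) (a : Fin p) :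
    (A * (succMatrix p : Matrix _ _ R)ᵀ) i a.succ = A i a := by
  simp [mul_apply, succMatrix]

@[simp]
lemma mul_transpose_succMatrix_apply_zero (A : Matrix m (Fin p) R) (i : m) :
    (A * (succMatrix p : Matrix _ _ R)ᵀ) i 0 = 0 := by
  simp [mul_apply, succMatrix, (Fin.succ_ne_zero _).symm]

end Entries

theorem eq_zero_of_matrix_mulVec_eq_zero {x : Cols p → R}
    (hx : matrix p 1 1 (castSuccMatrix (p + 1)) (succMatrix (p + 1)) *ᵥ x = 0) : x = 0 := by
  obtain ⟨X₁, X₂, X₃, Ψ, rfl⟩ : ∃ (X₁ X₂ X₃ : Matrix (Fin (p + 1)) (Fin p) R)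
      (Ψ : Matrix (Fin (p + 2)) (Fin (p + 1)) R),
      x = Sum.elim (Sum.elim X₁.vec X₂.vec) (Sum.elim X₃.vec Ψ.vec) :=
    ⟨of fun i a => x (.inl (.inl (a, i))), of fun i a => x (.inl (.inr (a, i))),
      of fun i a => x (.inr (.inl (a, i))), of fun k c => x (.inr (.inr (c, k))), by
        funext y
        rcases y with (_ | _) | (_ | _) <;> rfl⟩
  simp only [matrix, fromBlocks_mulVec, Sum.elim_comp_inl, Sum.elim_comp_inr, neg_mulVec,
    one_mulVec, zero_mulVec, transpose_one, one_kronecker_one, kronecker_mulVec_vec, add_zero,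
    zero_add, Matrix.one_mul, Matrix.mul_one, ← vec_neg, ← vec_add, ← Sum.elim_add_add] at hx
  simp only [← Sum.elim_zero_zero, Sum.elim_eq_iff, vec_eq_zero_iff, add_neg_eq_zero] at hx
  obtain ⟨⟨rfl, rfl⟩, h₃, h₄⟩ := hx
  have hΨ : Ψ = 0 := by
    refine eq_zero_of_diagonal_shift (fun i a => ?_) (fun i => ?_) (fun i => ?_)
    · have e₃ := congr_fun₂ h₃ i a.castSucc
      have e₄ := congr_fun₂ h₄ i a.succ
      simp only [mul_transpose_castSuccMatrix_apply_castSucc, transpose_castSuccMatrix_mul_apply,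
        mul_transpose_succMatrix_apply_succ, transpose_succMatrix_mul_apply] at e₃ e₄
      rw [← e₃, ← e₄]
    · simpa using (congr_fun₂ h₃ i (Fin.last p)).symm
    · simpa using (congr_fun₂ h₄ i 0).symm
  have hX : X₁ = 0 := by
    ext i a
    simpa [hΨ] using congr_fun₂ h₃ i a.castSucc
  simp [hX, hΨ]

theorem squareDet_castSuccMatrix_succMatrix_ne_zero [IsDomain R] :
    squareDet p 1 1 (castSuccMatrix (p + 1)) (succMatrix (p + 1)) ≠ (0 : R) := by
  intro h
  obtain ⟨x, hx0, hx⟩ := exists_mulVec_eq_zero_iff.2 h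
  refine hx0 (eq_zero_of_matrix_mulVec_eq_zero (funext fun k => ?_))
  have := congr_fun hx ((colsEquivRows p).symm k)
  rwa [← Equiv.coe_refl, submatrix_mulVec_equiv, Function.comp_apply,
    Equiv.apply_symm_apply] at this

end Schofield

section GenericMatrices

open MvPolynomial

variable {n₁ n₂ n₃ n₄ : ℕ}

noncomputable def genericV₁ : Matrix (Fin n₂) (Fin n₁) (MvPolynomial (SqVars n₁ n₂ n₃ n₄) ℂ) :=
  of fun i j => X (.inl (i, j))

noncomputable def genericV₂ : Matrix (Fin n₃) (Fin n₁) (MvPolynomial (SqVars n₁ n₂ n₃ n₄) ℂ) :=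
  of fun i j => X (.inr (.inl (i, j)))

noncomputable def genericV₃ : Matrix (Fin n₄) (Fin n₂) (MvPolynomial (SqVars n₁ n₂ n₃ n₄) ℂ) :=
  of fun i j => X (.inr (.inr (.inl (i, j))))

noncomputable def genericV₄ : Matrix (Fin n₄) (Fin n₃) (MvPolynomial (SqVars n₁ n₂ n₃ n₄) ℂ) :=
  of fun i j => X (.inr (.inr (.inr (i, j))))

variable (v₁ : Matrix (Fin n₂) (Fin n₁) ℂ) (v₂ : Matrix (Fin n₃) (Fin n₁) ℂ)
  (v₃ : Matrix (Fin n₄) (Fin n₂) ℂ) (v₄ : Matrix (Fin n₄) (Fin n₃) ℂ)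

@[simp] lemma map_genericV₁ : genericV₁.map (eval (sqPoint v₁ v₂ v₃ v₄)) = v₁ := by
  ext; simp [genericV₁, sqPoint]

@[simp] lemma map_genericV₂ : genericV₂.map (eval (sqPoint v₁ v₂ v₃ v₄)) = v₂ := by
  ext; simp [genericV₂, sqPoint]

@[simp] lemma map_genericV₃ : genericV₃.map (eval (sqPoint v₁ v₂ v₃ v₄)) = v₃ := by
  ext; simp [genericV₃, sqPoint]

@[simp] lemma map_genericV₄ : genericV₄.map (eval (sqPoint v₁ v₂ v₃ v₄)) = v₄ := by
  ext; simp [genericV₄, sqPoint]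

end GenericMatrices

section BasicSemiInvariants

variable {n n₃ n₄ p : ℕ}

theorem isSqSemiInvariant_det_genericV₁ :
    IsSqSemiInvariant (n₃ := n₃) (n₄ := n₄) 1 (-1) 0 0 (genericV₁ (n₁ := n) (n₂ := n)).det := by
  intro g₁ g₂ g₃ g₄ v₁ v₂ v₃ v₄
  simp only [sqEval_eq_eval_sqPoint, RingHom.map_det, RingHom.mapMatrix_apply, map_genericV₁,
    det_mul, det_nonsing_inv, Ring.inverse_eq_inv']
  simp
  ring

theorem isSqSemiInvariant_det_genericV₂ :
    IsSqSemiInvariant (n₂ := n₃) (n₄ := n₄) 1 0 (-1) 0 (genericV₂ (n₁ := n) (n₃ := n)).det := by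
  intro g₁ g₂ g₃ g₄ v₁ v₂ v₃ v₄
  simp only [sqEval_eq_eval_sqPoint, RingHom.map_det, RingHom.mapMatrix_apply, map_genericV₂,
    det_mul, det_nonsing_inv, Ring.inverse_eq_inv']
  simp
  ring

lemma det_genericV₁_ne_zero : (genericV₁ (n₁ := n) (n₂ := n) (n₃ := n₃) (n₄ := n₄)).det ≠ 0 := by
  intro h
  simpa [sqEval_eq_eval_sqPoint, RingHom.map_det] using congrArg (sqEval · 1 0 0 0) h

lemma det_genericV₂_ne_zero : (genericV₂ (n₁ := n) (n₂ := n₃) (n₃ := n) (n₄ := n₄)).det ≠ 0 := by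
  intro h
  simpa [sqEval_eq_eval_sqPoint, RingHom.map_det] using congrArg (sqEval · 0 1 0 0) h

variable (p) in
noncomputable def schofieldPoly : MvPolynomial (SqVars (p + 1) (p + 1) (p + 1) (p + 2)) ℂ :=
  Schofield.squareDet p genericV₁ genericV₂ genericV₃ genericV₄

lemma sqEval_schofieldPoly (v₁ v₂ : Matrix (Fin (p + 1)) (Fin (p + 1)) ℂ)
    (v₃ v₄ : Matrix (Fin (p + 2)) (Fin (p + 1)) ℂ) :
    sqEval (schofieldPoly p) v₁ v₂ v₃ v₄ = Schofield.squareDet p v₁ v₂ v₃ v₄ := by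
  rw [sqEval_eq_eval_sqPoint, schofieldPoly, Schofield.map_squareDet, map_genericV₁,
    map_genericV₂, map_genericV₃, map_genericV₄]

lemma schofieldPoly_ne_zero : schofieldPoly p ≠ 0 := by
  intro h
  apply Schofield.squareDet_castSuccMatrix_succMatrix_ne_zero (R := ℂ) (p := p)
  rw [← sqEval_schofieldPoly, h]
  simp [sqEval]

theorem isSqSemiInvariant_schofieldPoly :
    IsSqSemiInvariant p 1 1 (-(p + 1)) (schofieldPoly p) := by
  intro g₁ g₂ g₃ g₄ v₁ v₂ v₃ v₄
  have hg : ∀ g : (Matrix (Fin (p + 1)) (Fin (p + 1)) ℂ)ˣ,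
      (g : Matrix (Fin (p + 1)) (Fin (p + 1)) ℂ) * (g : Matrix (Fin (p + 1)) (Fin (p + 1)) ℂ)⁻¹ = 1 :=
    fun g => by rw [← coe_units_inv, Units.mul_inv]
  have := GeneralLinearGroup.det_ne_zero g₁
  have := GeneralLinearGroup.det_ne_zero g₂
  have := GeneralLinearGroup.det_ne_zero g₃
  rw [sqEval_schofieldPoly, sqEval_schofieldPoly,
    Schofield.squareDet_smul _ _ _ _ _ (hg g₁) (hg g₂) (hg g₃), det_nonsing_inv, det_nonsing_inv,
    det_nonsing_inv, Ring.inverse_eq_inv', neg_neg, ← Nat.cast_succ, zpow_natCast, _root_.zpow_neg,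
    zpow_natCast, _root_.zpow_neg_one, _root_.zpow_neg_one]
  simp only [inv_pow]
  field_simp
  ring

end BasicSemiInvariants

theorem exists_ne_zero_isSqSemiInvariant (p : ℕ) {σ₁ σ₂ σ₃ σ₄ : ℤ} (h₁₂₄ : 0 ≤ σ₁ + σ₂ + σ₄)
    (h₁₃₄ : 0 ≤ σ₁ + σ₃ + σ₄) (h₄ : σ₄ ≤ 0)
    (hsum : σ₁ * ↑(p + 1) + σ₂ * ↑(p + 1) + σ₃ * ↑(p + 1) + σ₄ * ↑(p + 2) = 0) :
    ∃ f : MvPolynomial (SqVars (p + 1) (p + 1) (p + 1) (p + 2)) ℂ,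
      f ≠ 0 ∧ IsSqSemiInvariant σ₁ σ₂ σ₃ σ₄ f := by
  push_cast at hsum
  obtain ⟨a, ha⟩ : ∃ a : ℕ, (a : ℤ) = σ₁ + σ₂ + σ₃ + σ₄ := ⟨_, Int.toNat_of_nonneg (by nlinarith)⟩
  obtain ⟨b, hb⟩ : ∃ b : ℕ, (b : ℤ) = σ₁ + σ₃ + σ₄ := ⟨_, Int.toNat_of_nonneg h₁₃₄⟩
  obtain ⟨c, hc⟩ : ∃ c : ℕ, (c : ℤ) = σ₁ + σ₂ + σ₄ := ⟨_, Int.toNat_of_nonneg h₁₂₄⟩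
  refine ⟨schofieldPoly p ^ a * genericV₁.det ^ b * genericV₂.det ^ c,
    mul_ne_zero (mul_ne_zero (pow_ne_zero _ schofieldPoly_ne_zero)
      (pow_ne_zero _ det_genericV₁_ne_zero)) (pow_ne_zero _ det_genericV₂_ne_zero), ?_⟩
  convert ((isSqSemiInvariant_schofieldPoly.pow a).mul
    (isSqSemiInvariant_det_genericV₁.pow b)).mul (isSqSemiInvariant_det_genericV₂.pow c) using 1
  · rw [ha, hb, hc]; linear_combination -hsum
  · rw [ha, hb]; ring
  · rw [ha, hc]; ring
  · rw [ha]; linear_combination hsum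

/-- for the square quiver with dimension vector `(n, n, n, n+1)`, a weight
`(σ₁, σ₂, σ₃, σ₄)` admits a nonzero semi-invariant iff `σ₁ + σ₂ + σ₄ ≥ 0`,
`σ₁ + σ₃ + σ₄ ≥ 0`, `σ₄ ≤ 0`, and `n σ₁ + n σ₂ + n σ₃ + (n+1) σ₄ = 0`. -/
theorem sq_semiinvariant_iff_nnnn1 (n : ℕ) (hn : 1 ≤ n) (σ₁ σ₂ σ₃ σ₄ : ℤ) :
    (∃ f : MvPolynomial (SqVars n n n (n + 1)) ℂ, f ≠ 0 ∧ IsSqSemiInvariant σ₁ σ₂ σ₃ σ₄ f)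
      ↔ (0 ≤ σ₁ + σ₂ + σ₄ ∧ 0 ≤ σ₁ + σ₃ + σ₄ ∧ σ₄ ≤ 0 ∧
          (n : ℤ) * σ₁ + (n : ℤ) * σ₂ + (n : ℤ) * σ₃ + ((n : ℤ) + 1) * σ₄ = 0) := by
  obtain ⟨p, rfl⟩ : ∃ p, n = p + 1 := ⟨n - 1, by omega⟩
  constructor
  · rintro ⟨f, hf0, hf⟩
    have hswap0 : MvPolynomial.rename sqSwap23 f ≠ 0 :=
      (map_ne_zero_iff _ (MvPolynomial.rename_injective _ sqSwap23.injective)).2 hf0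
    have hsum := hf.weight_dimension_pairing_eq_zero hf0
    refine ⟨hf.weight₁₂₄_nonneg hf0 (by omega) (by omega) (by omega),
      hf.rename_sqSwap23.weight₁₂₄_nonneg hswap0 (by omega) (by omega) (by omega),
      hf.weight₄_nonpos hf0 (by omega), ?_⟩
    push_cast at hsum ⊢
    linarith
  · rintro ⟨h₁₂₄, h₁₃₄, h₄, hsum⟩
    exact exists_ne_zero_isSqSemiInvariant p h₁₂₄ h₁₃₄ h₄ (by push_cast at hsum ⊢; linarith)
end
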